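/- Let p ≥ 1 be an integer, and for odd k set α_k = 2p+1 and φ_k = ∑_{j=−p}^{p} δ^k_{p,j} · j^{2p+1}. Then for every real number c: ∑_{k=0}^{p−1} φ_{2k+1} · c^{2k+1} / (2k+1)! = ∑_{j=−p}^{p} F_{p,j}(c) · j^{2p+1}; i.e., this sum equals q(c), where q is the polynomial of degree ≤ 2p interpolating the points (j, j^{2p+1}) for j = −p, …, p. -/

import Mathlib

open Polynomial

/-- Lagrange basis polynomial `F_{p,j}` on nodes `-p, …, p`. -/
noncomputable def Fpoly (p : ℕ) (j : ℤ) (x : ℝ) : ℝ :=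
  ∏ r ∈ (Finset.Icc (-(p:ℤ)) (p:ℤ)).erase j, (x - (r:ℝ)) / ((j:ℝ) - (r:ℝ))

/-- `δ^k_{p,j} = F_{p,j}^{(k)}(0)`. -/
noncomputable def delta (p k : ℕ) (j : ℤ) : ℝ := iteratedDeriv k (Fpoly p j) 0

/-- Polynomial version of `Fpoly`. -/
noncomputable def Bpoly (p : ℕ) (j : ℤ) : Polynomial ℝ :=
  ∏ r ∈ (Finset.Icc (-(p:ℤ)) (p:ℤ)).erase j, (C (((j:ℝ) - (r:ℝ))⁻¹) * (X - C (r:ℝ)))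

lemma Bpoly_eval (p : ℕ) (j : ℤ) (x : ℝ) : (Bpoly p j).eval x = Fpoly p j x := by
  simp only [Bpoly, Fpoly, eval_prod, eval_mul, eval_C, eval_sub, eval_X]
  exact Finset.prod_congr rfl fun r _ => by rw [div_eq_inv_mul]

lemma card_Icc_p (p : ℕ) : (Finset.Icc (-(p:ℤ)) (p:ℤ)).card = 2*p+1 := by
  rw [Int.card_Icc]; omega

lemma Bpoly_natDegree_le (p : ℕ) (j : ℤ) (hj : j ∈ Finset.Icc (-(p:ℤ)) (p:ℤ)) :
    (Bpoly p j).natDegree ≤ 2*p := by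
  refine le_trans (Polynomial.natDegree_prod_le _ _) ?_
  have h1 : ∀ r ∈ (Finset.Icc (-(p:ℤ)) (p:ℤ)).erase j,
      (C (((j:ℝ) - (r:ℝ))⁻¹) * (X - C (r:ℝ))).natDegree ≤ 1 := by
    intro r _
    refine le_trans (natDegree_mul_le) ?_
    rw [natDegree_C, natDegree_X_sub_C]
  refine le_trans (Finset.sum_le_card_nsmul _ _ 1 h1) ?_
  rw [Finset.card_erase_of_mem hj, card_Icc_p, smul_eq_mul]
  omega

/-- The interpolating polynomial. -/
noncomputable def Qpoly (p : ℕ) : Polynomial ℝ :=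
  ∑ j ∈ Finset.Icc (-(p:ℤ)) (p:ℤ), C ((j:ℝ)^(2*p+1)) * Bpoly p j

lemma Qpoly_eval (p : ℕ) (x : ℝ) :
    (Qpoly p).eval x = ∑ j ∈ Finset.Icc (-(p:ℤ)) (p:ℤ), Fpoly p j x * (j:ℝ)^(2*p+1) := by
  simp only [Qpoly, eval_finset_sum, eval_mul, eval_C, Bpoly_eval]
  exact Finset.sum_congr rfl fun j _ => mul_comm _ _

lemma Qpoly_natDegree_lt (p : ℕ) : (Qpoly p).natDegree < 2*p+1 := by
  have := Polynomial.natDegree_sum_le_of_forall_le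
    (Finset.Icc (-(p:ℤ)) (p:ℤ)) (fun j => C ((j:ℝ)^(2*p+1)) * Bpoly p j) (n := 2*p)
    (fun j hj => le_trans natDegree_mul_le (by
      simpa using Bpoly_natDegree_le p j hj))
  exact lt_of_le_of_lt this (by omega)

lemma Fpoly_neg (p : ℕ) (j : ℤ) (x : ℝ) : Fpoly p j (-x) = Fpoly p (-j) x := by
  unfold Fpoly
  refine Finset.prod_nbij' (fun r => -r) (fun r => -r) ?_ ?_ ?_ ?_ ?_
  · intro r hr
    simp only [Finset.mem_erase, Finset.mem_Icc] at hr ⊢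
    omega
  · intro r hr
    simp only [Finset.mem_erase, Finset.mem_Icc] at hr ⊢
    omega
  · intro r _; ring
  · intro r _; ring
  · intro r _
    push_cast
    rw [show (x - -(r:ℝ)) = -(-x - r) by ring, show ((-j:ℝ) - -(r:ℝ)) = -((j:ℝ) - r) by ring,
      neg_div_neg_eq]

lemma Qpoly_odd (p : ℕ) (x : ℝ) : (Qpoly p).eval (-x) = -(Qpoly p).eval x := by
  rw [Qpoly_eval, Qpoly_eval, ← Finset.sum_neg_distrib]
  refine Finset.sum_nbij' (fun j => -j) (fun j => -j) ?_ ?_ ?_ ?_ ?_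
  · intro j hj; simp only [Finset.mem_Icc] at hj ⊢; omega
  · intro j hj; simp only [Finset.mem_Icc] at hj ⊢; omega
  · intro j _; ring
  · intro j _; ring
  · intro j _
    rw [Fpoly_neg]
    push_cast
    rw [show (2*p+1) = 2*p+1 from rfl, Odd.neg_pow ⟨p, by ring⟩]
    ring

lemma coeff_comp_negX (Q : Polynomial ℝ) (n : ℕ) :
    (Q.comp (-X)).coeff n = (-1)^n * Q.coeff n := by
  induction Q using Polynomial.induction_on' with
  | add p q hp hq => simp [add_comp, hp, hq, mul_add]
  | monomial k a =>
    have h1 : (monomial k a : ℝ[X]).comp (-X) = monomial k ((-1:ℝ)^k * a) := by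
      have hC : ((-1 : ℝ[X]))^k = C ((-1:ℝ)^k) := by rw [C_pow]; simp
      rw [← C_mul_X_pow_eq_monomial, ← C_mul_X_pow_eq_monomial, mul_comp, C_comp, pow_comp,
        X_comp, neg_pow, C_mul, hC]
      ring
    rw [h1, coeff_monomial, coeff_monomial]
    split_ifs with h
    · subst h; ring
    · ring

lemma Qpoly_coeff_even (p m : ℕ) : (Qpoly p).coeff (2*m) = 0 := by
  have hcomp : (Qpoly p).comp (-X) = -(Qpoly p) := by
    apply Polynomial.funext
    intro x
    simp [eval_comp, Qpoly_odd]
  have := congrArg (fun q : Polynomial ℝ => q.coeff (2*m)) hcomp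
  simp only [coeff_comp_negX, coeff_neg, pow_mul, neg_one_sq, one_pow, one_mul] at this
  linarith

lemma iteratedDeriv_polyEval (P : Polynomial ℝ) (k : ℕ) :
    iteratedDeriv k (fun y => P.eval y) = fun x => (derivative^[k] P).eval x := by
  induction k with
  | zero => simp
  | succ k ih =>
    rw [iteratedDeriv_succ, ih]
    funext x
    rw [Function.iterate_succ_apply']
    exact Polynomial.deriv _

lemma delta_eq (p k : ℕ) (j : ℤ) :
    delta p k j = (Nat.factorial k : ℝ) * (Bpoly p j).coeff k := by
  have hF : Fpoly p j = fun y => (Bpoly p j).eval y := by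
    funext x; rw [Bpoly_eval]
  rw [delta, hF, iteratedDeriv_polyEval]
  simp only []
  rw [← Polynomial.coeff_zero_eq_eval_zero, Polynomial.coeff_iterate_derivative]
  simp [Nat.descFactorial_self, mul_comm]

/-- ∑_{k=0}^{p-1} φ_{2k+1} c^{2k+1}/(2k+1)! = ∑_{j=-p}^{p} F_{p,j}(c) j^{2p+1},
where φ_{2k+1} = ∑_j δ^{2k+1}_{p,j} j^{2p+1}; the right-hand side is q(c), the
polynomial of degree ≤ 2p interpolating the points (j, j^{2p+1}), j = -p, …, p. -/
theorem odd_error_coefficient_sum (p : ℕ) (hp : 1 ≤ p) (c : ℝ) :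
    ∑ k ∈ Finset.range p,
        (∑ j ∈ Finset.Icc (-(p:ℤ)) (p:ℤ), delta p (2*k+1) j * (j:ℝ)^(2*p+1))
          * c^(2*k+1) / (Nat.factorial (2*k+1) : ℝ)
      = ∑ j ∈ Finset.Icc (-(p:ℤ)) (p:ℤ), Fpoly p j c * (j:ℝ)^(2*p+1) := by
  have hfac : ∀ k : ℕ, (Nat.factorial (2*k+1) : ℝ) ≠ 0 :=
    fun k => Nat.cast_ne_zero.mpr (Nat.factorial_ne_zero _)
  have hinner : ∀ k : ℕ,
      (∑ j ∈ Finset.Icc (-(p:ℤ)) (p:ℤ), delta p (2*k+1) j * (j:ℝ)^(2*p+1))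
        = (Nat.factorial (2*k+1) : ℝ) * (Qpoly p).coeff (2*k+1) := by
    intro k
    rw [show (Qpoly p).coeff (2*k+1) =
        ∑ j ∈ Finset.Icc (-(p:ℤ)) (p:ℤ), ((j:ℝ)^(2*p+1)) * (Bpoly p j).coeff (2*k+1) by
      rw [Qpoly, Polynomial.finset_sum_coeff]
      exact Finset.sum_congr rfl fun j _ => Polynomial.coeff_C_mul _]
    rw [Finset.mul_sum]
    refine Finset.sum_congr rfl fun j _ => ?_
    rw [delta_eq]; ring
  have hLHS : ∑ k ∈ Finset.range p,
      (∑ j ∈ Finset.Icc (-(p:ℤ)) (p:ℤ), delta p (2*k+1) j * (j:ℝ)^(2*p+1))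
        * c^(2*k+1) / (Nat.factorial (2*k+1) : ℝ)
      = ∑ k ∈ Finset.range p, (Qpoly p).coeff (2*k+1) * c^(2*k+1) := by
    refine Finset.sum_congr rfl fun k _ => ?_
    rw [hinner k]
    field_simp
  rw [hLHS, ← Qpoly_eval]
  rw [Polynomial.eval_eq_sum_range' (Qpoly_natDegree_lt p)]
  -- now: ∑ k ∈ range p, coeff (2k+1) c^(2k+1) = ∑ n ∈ range (2p+1), coeff n * c^n
  rw [show ∑ k ∈ Finset.range p, (Qpoly p).coeff (2*k+1) * c^(2*k+1)
      = ∑ n ∈ (Finset.range p).image (fun k => 2*k+1), (Qpoly p).coeff n * c^n by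
    rw [Finset.sum_image (fun a _ b _ h => by omega)]]
  refine Finset.sum_subset ?_ ?_
  · intro n hn
    simp only [Finset.mem_image, Finset.mem_range] at hn ⊢
    obtain ⟨k, hk, rfl⟩ := hn
    omega
  · intro n hn hnot
    simp only [Finset.mem_image, Finset.mem_range] at hn hnot
    have heven : n % 2 = 0 := by
      rcases Nat.even_or_odd n with he | ho
      · exact Nat.even_iff.mp he
      · obtain ⟨m, hm⟩ := ho
        exact absurd ⟨m, by omega, by omega⟩ hnot
    obtain ⟨m, rfl⟩ : ∃ m, n = 2*m := ⟨n/2, by omega⟩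
    rw [Qpoly_coeff_even]
    ring
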